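/- Let a, b, c ∈ ℝ and let φ(x,y) = x²y + σy³ + ax + by + cy², where σ = 1 or σ = −1. Then φ does not have three pairwise distinct collinear critical points: there is no affine line in ℝ² containing three distinct points at each of which both partial derivatives of φ vanish. -/
import Mathlib


open MvPolynomial

/-- A point of ℝ² is a critical point of a polynomial in two variables if both
partial derivatives vanish there. -/
def IsCriticalPt2 (f : MvPolynomial (Fin 2) ℝ) (p : Fin 2 → ℝ) : Prop :=
  ∀ i, eval p (pderiv i f) = 0

lemma crit_eqs (a b c σ : ℝ) (p : Fin 2 → ℝ)
    (h : IsCriticalPt2 (X 0 ^ 2 * X 1 + C σ * X 1 ^ 3 + C a * X 0 + C b * X 1 + C c * X 1 ^ 2) p) :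
    2 * p 0 * p 1 + a = 0 ∧ p 0 ^ 2 + 3 * σ * p 1 ^ 2 + 2 * c * p 1 + b = 0 := by
  have h0 := h 0
  have h1 := h 1
  simp [pderiv_mul, pderiv_pow, pderiv_X, pderiv_C] at h0 h1
  constructor <;> nlinarith [h0, h1]

lemma pt_eq (p q : Fin 2 → ℝ) (h0 : p 0 = q 0) (h1 : p 1 = q 1) : p = q := by
  funext i; fin_cases i <;> assumption

lemma collinear_det (q₁ q₂ q₃ : Fin 2 → ℝ) (h : Collinear ℝ ({q₁, q₂, q₃} : Set (Fin 2 → ℝ))) :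
    (q₂ 0 - q₁ 0) * (q₃ 1 - q₁ 1) - (q₃ 0 - q₁ 0) * (q₂ 1 - q₁ 1) = 0 := by
  obtain ⟨v, hv⟩ := (collinear_iff_of_mem (show q₁ ∈ ({q₁, q₂, q₃} : Set (Fin 2 → ℝ)) by simp)).mp h
  obtain ⟨t₂, ht₂⟩ := hv q₂ (by simp)
  obtain ⟨t₃, ht₃⟩ := hv q₃ (by simp)
  have e2 : ∀ i, q₂ i = t₂ * v i + q₁ i := fun i => by rw [ht₂]; simp
  have e3 : ∀ i, q₃ i = t₃ * v i + q₁ i := fun i => by rw [ht₃]; simp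
  rw [e2 0, e2 1, e3 0, e3 1]; ring

/-- Two critical points on the x-axis (`x = 0` line): yields a contradiction. -/
lemma helperX (b c σ x₁ y₁ x₂ y₂ x₃ y₃ : ℝ) (hσ : σ ≠ 0)
    (hx1 : x₁ = 0) (hx2 : x₂ = 0)
    (h12 : ¬(x₁ = x₂ ∧ y₁ = y₂)) (h13 : ¬(x₁ = x₃ ∧ y₁ = y₃)) (h23 : ¬(x₂ = x₃ ∧ y₂ = y₃))
    (B1 : x₁ ^ 2 + 3 * σ * y₁ ^ 2 + 2 * c * y₁ + b = 0)
    (B2 : x₂ ^ 2 + 3 * σ * y₂ ^ 2 + 2 * c * y₂ + b = 0)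
    (B3 : x₃ ^ 2 + 3 * σ * y₃ ^ 2 + 2 * c * y₃ + b = 0)
    (Det : (x₂ - x₁) * (y₃ - y₁) - (x₃ - x₁) * (y₂ - y₁) = 0) : False := by
  subst hx1 hx2
  have hy12 : y₁ ≠ y₂ := fun h => h12 ⟨rfl, h⟩
  have hx3 : x₃ = 0 := by
    have h : x₃ * (y₂ - y₁) = 0 := by linear_combination -Det
    rcases mul_eq_zero.mp h with h | h
    · exact h
    · exact absurd (by linarith : y₁ = y₂) hy12
  subst hx3
  have hy13 : y₁ ≠ y₃ := fun h => h13 ⟨rfl, h⟩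
  have hy23 : y₂ ≠ y₃ := fun h => h23 ⟨rfl, h⟩
  have e12 : (y₁ - y₂) * (3 * σ * (y₁ + y₂) + 2 * c) = 0 := by linear_combination B1 - B2
  have e13 : (y₁ - y₃) * (3 * σ * (y₁ + y₃) + 2 * c) = 0 := by linear_combination B1 - B3
  have f12 : 3 * σ * (y₁ + y₂) + 2 * c = 0 :=
    (mul_eq_zero.mp e12).resolve_left (fun h => hy12 (by linarith))
  have f13 : 3 * σ * (y₁ + y₃) + 2 * c = 0 :=
    (mul_eq_zero.mp e13).resolve_left (fun h => hy13 (by linarith))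
  have h : (3 * σ) * (y₂ - y₃) = 0 := by linear_combination f12 - f13
  rcases mul_eq_zero.mp h with h | h
  · exact hσ (by linarith)
  · exact hy23 (by linarith)

/-- Two critical points on the `y = 0` line: yields a contradiction. -/
lemma helperY (b c σ x₁ y₁ x₂ y₂ x₃ y₃ : ℝ)
    (hy1 : y₁ = 0) (hy2 : y₂ = 0)
    (h12 : ¬(x₁ = x₂ ∧ y₁ = y₂)) (h13 : ¬(x₁ = x₃ ∧ y₁ = y₃)) (h23 : ¬(x₂ = x₃ ∧ y₂ = y₃))
    (B1 : x₁ ^ 2 + 3 * σ * y₁ ^ 2 + 2 * c * y₁ + b = 0)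
    (B2 : x₂ ^ 2 + 3 * σ * y₂ ^ 2 + 2 * c * y₂ + b = 0)
    (B3 : x₃ ^ 2 + 3 * σ * y₃ ^ 2 + 2 * c * y₃ + b = 0)
    (Det : (x₂ - x₁) * (y₃ - y₁) - (x₃ - x₁) * (y₂ - y₁) = 0) : False := by
  subst hy1 hy2
  have hx12 : x₁ ≠ x₂ := fun h => h12 ⟨h, rfl⟩
  have hy3 : y₃ = 0 := by
    have h : (x₂ - x₁) * y₃ = 0 := by linear_combination Det
    rcases mul_eq_zero.mp h with h | h
    · exact absurd (by linarith : x₁ = x₂) hx12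
    · exact h
  subst hy3
  have hx13 : x₁ ≠ x₃ := fun h => h13 ⟨h, rfl⟩
  have hx23 : x₂ ≠ x₃ := fun h => h23 ⟨h, rfl⟩
  have e12 : (x₁ - x₂) * (x₁ + x₂) = 0 := by linear_combination B1 - B2
  have e13 : (x₁ - x₃) * (x₁ + x₃) = 0 := by linear_combination B1 - B3
  have f12 : x₁ + x₂ = 0 := (mul_eq_zero.mp e12).resolve_left (fun h => hx12 (by linarith))
  have f13 : x₁ + x₃ = 0 := (mul_eq_zero.mp e13).resolve_left (fun h => hx13 (by linarith))
  exact hx23 (by linarith)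

/-- If `a ≠ 0` and two critical points share a `y`-coordinate, they coincide. -/
lemma eq_y_case (a x₁ y₁ x₂ y₂ : ℝ) (ha : a ≠ 0)
    (A1 : 2 * x₁ * y₁ + a = 0) (A2 : 2 * x₂ * y₂ + a = 0) (h : y₁ = y₂) :
    x₁ = x₂ ∧ y₁ = y₂ := by
  refine ⟨?_, h⟩
  have hy : y₁ ≠ 0 := by
    intro h0
    rw [h0] at A1
    exact ha (by linarith)
  have e : (x₁ - x₂) * (2 * y₁) = 0 := by linear_combination A1 - A2 - 2 * x₂ * h
  rcases mul_eq_zero.mp e with h' | h'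
  · linarith
  · exact absurd (by linarith : y₁ = 0) hy

lemma algebra_core (a b c σ x₁ y₁ x₂ y₂ x₃ y₃ : ℝ) (hσ : σ = 1 ∨ σ = -1)
    (h12 : ¬(x₁ = x₂ ∧ y₁ = y₂)) (h13 : ¬(x₁ = x₃ ∧ y₁ = y₃)) (h23 : ¬(x₂ = x₃ ∧ y₂ = y₃))
    (A1 : 2 * x₁ * y₁ + a = 0) (B1 : x₁ ^ 2 + 3 * σ * y₁ ^ 2 + 2 * c * y₁ + b = 0)
    (A2 : 2 * x₂ * y₂ + a = 0) (B2 : x₂ ^ 2 + 3 * σ * y₂ ^ 2 + 2 * c * y₂ + b = 0)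
    (A3 : 2 * x₃ * y₃ + a = 0) (B3 : x₃ ^ 2 + 3 * σ * y₃ ^ 2 + 2 * c * y₃ + b = 0)
    (Det : (x₂ - x₁) * (y₃ - y₁) - (x₃ - x₁) * (y₂ - y₁) = 0) : False := by
  have hσ0 : σ ≠ 0 := by rcases hσ with h | h <;> rw [h] <;> norm_num
  by_cases ha : a = 0
  · -- each point lies on a coordinate axis
    have P1 : x₁ = 0 ∨ y₁ = 0 := mul_eq_zero.mp (by nlinarith [A1])
    have P2 : x₂ = 0 ∨ y₂ = 0 := mul_eq_zero.mp (by nlinarith [A2])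
    have P3 : x₃ = 0 ∨ y₃ = 0 := mul_eq_zero.mp (by nlinarith [A3])
    rcases P1 with p1 | p1 <;> rcases P2 with p2 | p2 <;> rcases P3 with p3 | p3
    · exact helperX b c σ x₁ y₁ x₂ y₂ x₃ y₃ hσ0 p1 p2 h12 h13 h23 B1 B2 B3 Det
    · exact helperX b c σ x₁ y₁ x₂ y₂ x₃ y₃ hσ0 p1 p2 h12 h13 h23 B1 B2 B3 Det
    · -- x₁ = 0, y₂ = 0, x₃ = 0 : pair (1,3) on x-axis
      refine helperX b c σ x₁ y₁ x₃ y₃ x₂ y₂ hσ0 p1 p3 ?_ ?_ ?_ B1 B3 B2 (by linarith)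
      · exact fun h => h13 ⟨h.1, h.2⟩
      · exact fun h => h12 ⟨h.1, h.2⟩
      · exact fun h => h23 ⟨h.1.symm, h.2.symm⟩
    · -- x₁ = 0, y₂ = 0, y₃ = 0 : pair (2,3)
      refine helperY b c σ x₂ y₂ x₃ y₃ x₁ y₁ p2 p3 ?_ ?_ ?_ B2 B3 B1 (by linarith [Det]; )
      · exact fun h => h23 ⟨h.1, h.2⟩
      · exact fun h => h12 ⟨h.1.symm, h.2.symm⟩
      · exact fun h => h13 ⟨h.1.symm, h.2.symm⟩
    · -- y₁ = 0, x₂ = 0, x₃ = 0 : pair (2,3)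
      refine helperX b c σ x₂ y₂ x₃ y₃ x₁ y₁ hσ0 p2 p3 ?_ ?_ ?_ B2 B3 B1 (by linarith)
      · exact fun h => h23 ⟨h.1, h.2⟩
      · exact fun h => h12 ⟨h.1.symm, h.2.symm⟩
      · exact fun h => h13 ⟨h.1.symm, h.2.symm⟩
    · -- y₁ = 0, x₂ = 0, y₃ = 0 : pair (1,3)
      refine helperY b c σ x₁ y₁ x₃ y₃ x₂ y₂ p1 p3 ?_ ?_ ?_ B1 B3 B2 (by linarith)
      · exact fun h => h13 ⟨h.1, h.2⟩
      · exact fun h => h12 ⟨h.1, h.2⟩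
      · exact fun h => h23 ⟨h.1.symm, h.2.symm⟩
    · exact helperY b c σ x₁ y₁ x₂ y₂ x₃ y₃ p1 p2 h12 h13 h23 B1 B2 B3 Det
    · exact helperY b c σ x₁ y₁ x₂ y₂ x₃ y₃ p1 p2 h12 h13 h23 B1 B2 B3 Det
  · -- a ≠ 0 : points on hyperbola; collinearity forces two equal y's
    have key : a * ((y₃ - y₁) * ((y₁ - y₂) * (y₃ - y₂))) = 0 := by
      linear_combination ((y₂ - y₁) * y₂ * y₃ - (y₃ - y₁) * y₂ * y₃) * A1 +
        (y₃ - y₁) * y₁ * y₃ * A2 - (y₂ - y₁) * y₁ * y₂ * A3 - 2 * y₁ * y₂ * y₃ * Det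
    rcases mul_eq_zero.mp key with h | h
    · exact ha h
    rcases mul_eq_zero.mp h with h | h
    · exact h13 (eq_y_case a x₁ y₁ x₃ y₃ ha A1 A3 (by linarith))
    rcases mul_eq_zero.mp h with h | h
    · exact h12 (eq_y_case a x₁ y₁ x₂ y₂ ha A1 A2 (by linarith))
    · exact h23 (eq_y_case a x₂ y₂ x₃ y₃ ha A2 A3 (by linarith))

/-- For σ = ±1, the polynomial φ(x,y) = x²y + σy³ + ax + by + cy² does not have three
pairwise distinct collinear critical points. -/
theorem phi_no_three_collinear_critical_points (a b c σ : ℝ) (hσ : σ = 1 ∨ σ = -1) :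
    ¬ ∃ q₁ q₂ q₃ : Fin 2 → ℝ, q₁ ≠ q₂ ∧ q₁ ≠ q₃ ∧ q₂ ≠ q₃ ∧
      IsCriticalPt2 (X 0 ^ 2 * X 1 + C σ * X 1 ^ 3 + C a * X 0 + C b * X 1 + C c * X 1 ^ 2) q₁ ∧
      IsCriticalPt2 (X 0 ^ 2 * X 1 + C σ * X 1 ^ 3 + C a * X 0 + C b * X 1 + C c * X 1 ^ 2) q₂ ∧
      IsCriticalPt2 (X 0 ^ 2 * X 1 + C σ * X 1 ^ 3 + C a * X 0 + C b * X 1 + C c * X 1 ^ 2) q₃ ∧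
      Collinear ℝ ({q₁, q₂, q₃} : Set (Fin 2 → ℝ)) := by
  rintro ⟨q₁, q₂, q₃, h12, h13, h23, hc1, hc2, hc3, hcol⟩
  obtain ⟨A1, B1⟩ := crit_eqs a b c σ q₁ hc1
  obtain ⟨A2, B2⟩ := crit_eqs a b c σ q₂ hc2
  obtain ⟨A3, B3⟩ := crit_eqs a b c σ q₃ hc3
  have Det := collinear_det q₁ q₂ q₃ hcol
  exact algebra_core a b c σ (q₁ 0) (q₁ 1) (q₂ 0) (q₂ 1) (q₃ 0) (q₃ 1) hσ
    (fun h => h12 (pt_eq _ _ h.1 h.2)) (fun h => h13 (pt_eq _ _ h.1 h.2))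
    (fun h => h23 (pt_eq _ _ h.1 h.2)) A1 B1 A2 B2 A3 B3 Det
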